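/- Let S ∈ 𝒮⁰ be such that the set {S n : n ≤ 0} is NOT bounded above, and let η be the corresponding particle configuration. Then: (i) there exists no Y ∈ 𝒴 with Φ Y = S; (ii) for the truncated configurations η^{[k]} defined by η^{[k]} n = η n if n > k and 0 otherwise, the transformed configurations converge pointwise to 1 − η as k → −∞, i.e. for every n ∈ ℤ there exists k₀ such that (T η^{[k]}) n = 1 − η n for all k ≤ k₀. -/

import Mathlib

/-!
For (i): if `Φ Y = S` then every step of `S` is compensated by `Y` (an up-step of `Y` is a
down-step of `S`, and otherwise `S` goes up while `Y` does not), so `S + Y` is nondecreasing.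
As `Y ≥ 0`, this bounds `S m ≤ S 0 + Y 0` for all `m ≤ 0`.

For (ii): fix `n`. Unboundedness of the past gives `m < n` with `S n < S m`. For `k ≤ m` the
truncated path `S^{[k]}` rises with slope one up to time `k` and then has the increments of `S`,
so its running maximum at `n - 1` already exceeds its value at `n`. Hence the maximum does not
move at time `n`, and the step of `T S^{[k]}` at `n` is the negative of the step of `S`, which
says exactly that `T η^{[k]}` at `n` equals `1 - η n`.
-/

open Set

/-- The past maximum `M n = sup_{m ≤ n} S m` of a two-sided path. -/
noncomputable def ballMax (S : ℤ → ℤ) (n : ℤ) : ℤ := sSup (S '' Set.Iic n)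

/-- Pitman's transform `(TS) n = 2 M n - S n - 2 M 0`. -/
noncomputable def Tbb (S : ℤ → ℤ) : ℤ → ℤ := fun n => 2 * ballMax S n - S n - 2 * ballMax S 0

section IntPath

variable {α : Type*} [SemilatticeSup α] [Nonempty α] {f : ℤ → α}

theorem BddAbove.image_Iic_of_image_Iic {a : ℤ} (ha : BddAbove (f '' Iic a)) (b : ℤ) :
    BddAbove (f '' Iic b) := by
  have hsub : Iic b ⊆ Iic a ∪ Icc a b := fun x hx => by
    rcases le_total x a with h | h
    exacts [Or.inl h, Or.inr ⟨h, hx⟩]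
  refine BddAbove.mono ?_ (ha.union ((finite_Icc a b).image f).bddAbove)
  rw [← image_union]
  exact image_mono hsub

theorem bddAbove_image_Iic_of_monotoneOn {k : ℤ} (hf : MonotoneOn f (Iic k)) (p : ℤ) :
    BddAbove (f '' Iic p) :=
  BddAbove.image_Iic_of_image_Iic ⟨f k, by rintro _ ⟨q, hq, rfl⟩; exact hf hq self_mem_Iic hq⟩ p

end IntPath

theorem sub_eq_sub_of_increments_eq {G : Type*} [AddCommGroup G] {f g : ℤ → G} {k : ℤ}
    (h : ∀ m, k < m → f m - f (m - 1) = g m - g (m - 1)) {a b : ℤ} (ha : k ≤ a) (hb : k ≤ b) :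
    f a - f b = g a - g b := by
  have hconst : ∀ m, k ≤ m → f m - g m = f k - g k := by
    intro m hm
    induction m, hm using Int.leInduction with
    | base => rfl
    | succ p hp ih =>
      have hp1 := h (p + 1) (by omega)
      rw [add_sub_cancel_right] at hp1
      rw [← ih, sub_eq_sub_iff_sub_eq_sub, hp1]
  rw [sub_eq_sub_iff_sub_eq_sub, hconst a ha, hconst b hb]

theorem le_ballMax {S : ℤ → ℤ} {m n : ℤ} (h : BddAbove (S '' Iic n)) (hmn : m ≤ n) :
    S m ≤ ballMax S n :=
  le_csSup h ⟨m, hmn, rfl⟩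

theorem ballMax_eq_of_le_ballMax_sub_one {S : ℤ → ℤ} {n : ℤ} (h : BddAbove (S '' Iic (n - 1)))
    (hn : S n ≤ ballMax S (n - 1)) : ballMax S n = ballMax S (n - 1) := by
  rw [ballMax, ← Iio_insert, ← Iic_sub_one_eq_Iio, image_insert_eq,
    csSup_insert h (image_nonempty.2 nonempty_Iic)]
  exact sup_eq_right.2 hn

theorem Tbb_sub_Tbb_sub_one_of_le {S : ℤ → ℤ} {m n : ℤ} (h : BddAbove (S '' Iic (n - 1)))
    (hmn : m ≤ n - 1) (hSm : S n ≤ S m) : Tbb S n - Tbb S (n - 1) = S (n - 1) - S n := by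
  have hM := ballMax_eq_of_le_ballMax_sub_one h (hSm.trans (le_ballMax h hmn))
  simp only [Tbb, hM]
  ring

theorem monotone_add_of_carrier {S Y : ℤ → ℤ}
    (hY : ∀ n, |Y n - Y (n - 1)| = 1 ∨ (Y n = 0 ∧ Y (n - 1) = 0))
    (hΦ : ∀ n, S n - S (n - 1) = if Y n = Y (n - 1) + 1 then -1 else 1) : Monotone (S + Y) := by
  refine monotone_of_sub_one_le fun n _ => ?_
  have hSn := hΦ n
  simp only [Pi.add_apply]
  split_ifs at hSn
  · omega
  · rcases hY n with hYn | hYn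
    · rw [abs_eq zero_le_one] at hYn
      omega
    · omega

theorem bddAbove_image_Iic_of_carrier {S Y : ℤ → ℤ} (hY0 : ∀ n, 0 ≤ Y n)
    (hY : ∀ n, |Y n - Y (n - 1)| = 1 ∨ (Y n = 0 ∧ Y (n - 1) = 0))
    (hΦ : ∀ n, S n - S (n - 1) = if Y n = Y (n - 1) + 1 then -1 else 1) (a : ℤ) :
    BddAbove (S '' Iic a) := by
  refine ⟨S a + Y a, ?_⟩
  rintro _ ⟨m, hm, rfl⟩
  have := monotone_add_of_carrier hY hΦ hm
  simp only [Pi.add_apply] at this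
  linarith [hY0 m]

section Truncation

variable {P η : ℤ → ℤ} {k : ℤ}

theorem monotoneOn_Iic_of_truncation
    (hP : ∀ n, P n - P (n - 1) = 1 - 2 * (if k < n then η n else 0)) : MonotoneOn P (Iic k) :=
  monotoneOn_of_sub_one_le ordConnected_Iic fun n _ hn _ => by
    have := hP n
    rw [if_neg (not_lt.2 hn)] at this
    omega

theorem sub_eq_sub_of_truncation {S : ℤ → ℤ} (hstep : ∀ n, S n - S (n - 1) = 1 - 2 * η n)
    (hP : ∀ n, P n - P (n - 1) = 1 - 2 * (if k < n then η n else 0)) {a b : ℤ} (ha : k ≤ a)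
    (hb : k ≤ b) : P a - P b = S a - S b :=
  sub_eq_sub_of_increments_eq (fun m hm => by rw [hP, hstep, if_pos hm]) ha hb

end Truncation

theorem stmt_3_general (S : ℤ → ℤ)
    (hS : ∀ n : ℤ, |S n - S (n - 1)| = 1)
    (hUnbdd : ¬ BddAbove (S '' Set.Iic 0))
    (η : ℤ → ℤ) (hη : ∀ n : ℤ, η n = if S n - S (n - 1) = -1 then 1 else 0)
    (Sk : ℤ → ℤ → ℤ)
    (hSkstep : ∀ k n : ℤ, Sk k n - Sk k (n - 1) = 1 - 2 * (if k < n then η n else 0))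
    (Tηk : ℤ → ℤ → ℤ)
    (hTηk : ∀ k n : ℤ, Tηk k n = if Tbb (Sk k) n - Tbb (Sk k) (n - 1) = -1 then 1 else 0) :
    (¬ ∃ Y : ℤ → ℤ, (∀ n : ℤ, 0 ≤ Y n) ∧
        (∀ n : ℤ, |Y n - Y (n - 1)| = 1 ∨ (Y n = 0 ∧ Y (n - 1) = 0)) ∧
        (∀ n : ℤ, S n - S (n - 1) = if Y n = Y (n - 1) + 1 then -1 else 1)) ∧
    (∀ n : ℤ, ∃ k₀ : ℤ, ∀ k : ℤ, k ≤ k₀ → Tηk k n = 1 - η n) := by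
  have hstep : ∀ n, S n - S (n - 1) = 1 - 2 * η n := fun n => by
    have hSn := abs_eq zero_le_one |>.1 (hS n)
    rw [hη n]
    split_ifs <;> omega
  refine ⟨fun ⟨Y, hY0, hY, hΦ⟩ => hUnbdd (bddAbove_image_Iic_of_carrier hY0 hY hΦ 0), fun n => ?_⟩
  obtain ⟨_, ⟨m, hm, rfl⟩, hSm⟩ :=
    not_bddAbove_iff.1 (fun h => hUnbdd (h.image_Iic_of_image_Iic 0)) (S n)
  rw [mem_Iic] at hm
  refine ⟨m, fun k hk => ?_⟩
  have hagree {a b : ℤ} (ha : m ≤ a) (hb : m ≤ b) : Sk k a - Sk k b = S a - S b :=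
    sub_eq_sub_of_truncation hstep (hSkstep k) (hk.trans ha) (hk.trans hb)
  have hT : Tbb (Sk k) n - Tbb (Sk k) (n - 1) = S (n - 1) - S n := by
    rw [← hagree hm (by omega : m ≤ n)]
    refine Tbb_sub_Tbb_sub_one_of_le
      (bddAbove_image_Iic_of_monotoneOn (monotoneOn_Iic_of_truncation (hSkstep k)) _) hm ?_
    linarith [hagree (by omega : m ≤ n) le_rfl]
  have hSn := abs_eq zero_le_one |>.1 (hS n)
  rw [hTηk, hT, hη]
  split_ifs <;> omega

/-- If `S ∈ 𝒮⁰` has `{S n : n ≤ 0}` unbounded above, then (i) there is no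
carrier `Y ∈ 𝒴` with `Φ Y = S`; and (ii) the box-ball transforms of the truncated
configurations `η^{[k]}` converge pointwise to `1 - η` as `k → -∞`.  Here `Sk k` is the path
encoding of the truncation `η^{[k]}` and `Tηk k` is its box-ball transform. -/
theorem stmt_3 (S : ℤ → ℤ) (hS0 : S 0 = 0)
    (hS : ∀ n : ℤ, |S n - S (n - 1)| = 1)
    (hUnbdd : ¬ BddAbove (S '' Set.Iic 0))
    (η : ℤ → ℤ) (hη : ∀ n : ℤ, η n = if S n - S (n - 1) = -1 then 1 else 0)
    (Sk : ℤ → ℤ → ℤ)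
    (hSk0 : ∀ k : ℤ, Sk k 0 = 0)
    (hSkstep : ∀ k n : ℤ, Sk k n - Sk k (n - 1) = 1 - 2 * (if k < n then η n else 0))
    (Tηk : ℤ → ℤ → ℤ)
    (hTηk : ∀ k n : ℤ, Tηk k n = if Tbb (Sk k) n - Tbb (Sk k) (n - 1) = -1 then 1 else 0) :
    (¬ ∃ Y : ℤ → ℤ, (∀ n : ℤ, 0 ≤ Y n) ∧
        (∀ n : ℤ, |Y n - Y (n - 1)| = 1 ∨ (Y n = 0 ∧ Y (n - 1) = 0)) ∧
        (∀ n : ℤ, S n - S (n - 1) = if Y n = Y (n - 1) + 1 then -1 else 1)) ∧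
    (∀ n : ℤ, ∃ k₀ : ℤ, ∀ k : ℤ, k ≤ k₀ → Tηk k n = 1 - η n) :=
  stmt_3_general S hS hUnbdd η hη Sk hSkstep Tηk hTηk
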